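/- Let ν < 0. For φ ∈ H_{ν,0}(ℝ), define (Jφ)(x) = -∫_x^∞ φ(t) dt. Then J is a bounded linear operator on H_{ν,0}(ℝ) with norm 1/|ν|, and for continuously differentiable φ with φ' ∈ H_{ν,0}(ℝ) and appropriate decay, J(φ') = φ. -/

import Mathlib

/-!
Cauchy–Schwarz against the weight `e^{νt}` gives
`|Jf(x)|² ≤ (e^{νx}/|ν|) ∫_x^∞ |f(t)|² e^{-νt} dt`; multiplying by `e^{-2νx}`, integrating and
exchanging the order of integration (Schur's test) gives `‖Jf‖ ≤ ‖f‖/|ν|`.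
The constant is sharp: for `a < ν` the function `f = 1_{[0,∞)} e^{ax}` lies in `H_{ν,0}` and
`Jf = f/a` on `[0,∞)`, so `‖J‖ ≥ 1/|a|`; let `a → ν`.
Finally `J(φ') = φ` is the fundamental theorem of calculus on `[x, ∞)`.
-/

open MeasureTheory Complex

/-- The exponentially weighted measure `e^{-2νx} dx` on `ℝ`;
`Lp ℂ 2 (wMeasure ν)` is the space `H_{ν,0}(ℝ)`. -/
noncomputable def wMeasure (ν : ℝ) : Measure ℝ :=
  (volume : Measure ℝ).withDensity fun x => ENNReal.ofReal (Real.exp (-2 * ν * x))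

open Set Filter ENNReal

theorem ofReal_exp_mul_ofReal_exp (a b : ℝ) :
    ENNReal.ofReal (Real.exp a) * ENNReal.ofReal (Real.exp b) =
      ENNReal.ofReal (Real.exp (a + b)) := by
  rw [← ENNReal.ofReal_mul (Real.exp_pos a).le, Real.exp_add]

theorem measurable_ofReal_exp_mul (a : ℝ) :
    Measurable fun x : ℝ => ENNReal.ofReal (Real.exp (a * x)) := by fun_prop

theorem lintegral_ofReal_exp_mul_Ioi {a : ℝ} (ha : a < 0) (c : ℝ) :
    ∫⁻ x in Ioi c, ENNReal.ofReal (Real.exp (a * x)) =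
      ENNReal.ofReal (-a)⁻¹ * ENNReal.ofReal (Real.exp (a * c)) := by
  rw [← ENNReal.ofReal_mul (by simpa using ha.le), ← ofReal_integral_eq_lintegral_ofReal
    (integrableOn_exp_mul_Ioi ha c) (ae_of_all _ fun x => (Real.exp_pos _).le),
    integral_exp_mul_Ioi ha]
  ring_nf

theorem lintegral_ofReal_exp_mul_Iio {a : ℝ} (ha : 0 < a) (c : ℝ) :
    ∫⁻ x in Iio c, ENNReal.ofReal (Real.exp (a * x)) =
      ENNReal.ofReal a⁻¹ * ENNReal.ofReal (Real.exp (a * c)) := by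
  rw [restrict_Iio_eq_restrict_Iic, ← ENNReal.ofReal_mul (inv_nonneg.2 ha.le),
    ← ofReal_integral_eq_lintegral_ofReal (integrableOn_exp_mul_Iic ha c)
      (ae_of_all _ fun x => (Real.exp_pos _).le), integral_exp_mul_Iic ha]
  ring_nf

theorem ENNReal.sq_lintegral_mul_le {α : Type*} [MeasurableSpace α] {μ : Measure α}
    {f g : α → ℝ≥0∞} (hf : AEMeasurable f μ) (hg : AEMeasurable g μ) :
    (∫⁻ a, f a * g a ∂μ) ^ 2 ≤ (∫⁻ a, f a ^ 2 ∂μ) * ∫⁻ a, g a ^ 2 ∂μ := by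
  have h := ENNReal.lintegral_mul_le_Lp_mul_Lq μ Real.HolderConjugate.two_two hf hg
  simp only [Pi.mul_apply, ENNReal.rpow_two] at h
  calc (∫⁻ a, f a * g a ∂μ) ^ 2
      ≤ ((∫⁻ a, f a ^ 2 ∂μ) ^ (1 / 2 : ℝ) * (∫⁻ a, g a ^ 2 ∂μ) ^ (1 / 2 : ℝ)) ^ 2 := by
        gcongr
    _ = _ := by
      rw [mul_pow, ← ENNReal.rpow_natCast, ← ENNReal.rpow_natCast (n := 2),
        ← ENNReal.rpow_mul, ← ENNReal.rpow_mul]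
      norm_num

theorem sq_eLpNorm_two {α E : Type*} [MeasurableSpace α] [NormedAddCommGroup E]
    {μ : Measure α} (f : α → E) : eLpNorm f 2 μ ^ 2 = ∫⁻ x, ‖f x‖ₑ ^ 2 ∂μ := by
  rw [eLpNorm_eq_lintegral_rpow_enorm_toReal two_ne_zero ofNat_ne_top, ← ENNReal.rpow_natCast,
    ← ENNReal.rpow_mul]
  simp

theorem lintegral_lintegral_Ioi_swap {μ ν : Measure ℝ} [SFinite μ] [SFinite ν]
    {F : ℝ → ℝ → ℝ≥0∞} (hF : Measurable (Function.uncurry F)) :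
    ∫⁻ x, ∫⁻ t in Ioi x, F x t ∂ν ∂μ = ∫⁻ t, ∫⁻ x in Iio t, F x t ∂μ ∂ν := by
  set G : ℝ × ℝ → ℝ≥0∞ := {p | p.1 < p.2}.indicator (Function.uncurry F)
  have hG : Measurable G := hF.indicator (measurableSet_lt measurable_fst measurable_snd)
  calc ∫⁻ x, ∫⁻ t in Ioi x, F x t ∂ν ∂μ = ∫⁻ x, ∫⁻ t, G (x, t) ∂ν ∂μ := by
        refine lintegral_congr fun x => ?_
        rw [← lintegral_indicator measurableSet_Ioi]
        rfl
    _ = ∫⁻ t, ∫⁻ x, G (x, t) ∂μ ∂ν := lintegral_lintegral_swap hG.aemeasurable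
    _ = ∫⁻ t, ∫⁻ x in Iio t, F x t ∂μ ∂ν := by
        refine lintegral_congr fun t => ?_
        rw [← lintegral_indicator measurableSet_Iio]
        rfl

theorem sq_lintegral_Ioi_le {b : ℝ} (hb : b < 0) {g : ℝ → ℝ≥0∞} (hg : AEMeasurable g)
    (x : ℝ) :
    (∫⁻ t in Ioi x, g t) ^ 2 ≤ ENNReal.ofReal (-b)⁻¹ * ENNReal.ofReal (Real.exp (b * x)) *
      ∫⁻ t in Ioi x, ENNReal.ofReal (Real.exp (-b * t)) * g t ^ 2 := by
  have hsplit : ∀ t, g t = ENNReal.ofReal (Real.exp (b / 2 * t)) *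
      (ENNReal.ofReal (Real.exp (-b / 2 * t)) * g t) := fun t => by
    rw [← mul_assoc, ofReal_exp_mul_ofReal_exp, ← add_mul, neg_div, add_neg_cancel]; simp
  have hsq : ∀ c t : ℝ,
      ENNReal.ofReal (Real.exp (c / 2 * t)) ^ 2 = ENNReal.ofReal (Real.exp (c * t)) :=
    fun c t => by rw [sq, ofReal_exp_mul_ofReal_exp]; ring_nf
  calc (∫⁻ t in Ioi x, g t) ^ 2
      = (∫⁻ t in Ioi x, ENNReal.ofReal (Real.exp (b / 2 * t)) *
          (ENNReal.ofReal (Real.exp (-b / 2 * t)) * g t)) ^ 2 := by simp_rw [← hsplit]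
    _ ≤ _ := ENNReal.sq_lintegral_mul_le (measurable_ofReal_exp_mul _).aemeasurable
        ((measurable_ofReal_exp_mul _).aemeasurable.mul hg.restrict)
    _ = _ := by
      simp_rw [mul_pow, hsq, lintegral_ofReal_exp_mul_Ioi hb]

theorem wMeasure_absolutelyContinuous (ν : ℝ) : wMeasure ν ≪ volume :=
  withDensity_absolutelyContinuous _ _

theorem absolutelyContinuous_wMeasure (ν : ℝ) : volume ≪ wMeasure ν :=
  withDensity_absolutelyContinuous' (measurable_ofReal_exp_mul _).aemeasurable
    (ae_of_all _ fun x => by simp [Real.exp_pos])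

theorem lintegral_wMeasure (ν : ℝ) (g : ℝ → ℝ≥0∞) :
    ∫⁻ x, g x ∂wMeasure ν = ∫⁻ x, ENNReal.ofReal (Real.exp (-2 * ν * x)) * g x :=
  lintegral_withDensity_eq_lintegral_mul_non_measurable _ (measurable_ofReal_exp_mul _)
    (ae_of_all _ fun _ => ENNReal.ofReal_lt_top) g

theorem lintegral_sq_lintegral_Ioi_le_of_measurable {ν : ℝ} (hν : ν < 0) {g : ℝ → ℝ≥0∞}
    (hg : Measurable g) :
    ∫⁻ x, (∫⁻ t in Ioi x, g t) ^ 2 ∂wMeasure ν ≤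
      ENNReal.ofReal (-ν)⁻¹ ^ 2 * ∫⁻ x, g x ^ 2 ∂wMeasure ν := by
  set C := ENNReal.ofReal (-ν)⁻¹
  set e : ℝ → ℝ → ℝ≥0∞ := fun c x => ENNReal.ofReal (Real.exp (c * x))
  have he : ∀ c d x, e c x * e d x = e (c + d) x := fun c d x => by
    simp only [e, ofReal_exp_mul_ofReal_exp, add_mul]
  rw [lintegral_wMeasure, lintegral_wMeasure]
  calc ∫⁻ x, e (-2 * ν) x * (∫⁻ t in Ioi x, g t) ^ 2
      ≤ ∫⁻ x, C * ∫⁻ t in Ioi x, e (-ν) x * (e (-ν) t * g t ^ 2) := by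
        refine lintegral_mono fun x => ?_
        rw [lintegral_const_mul' _ _ ENNReal.ofReal_ne_top]
        calc e (-2 * ν) x * (∫⁻ t in Ioi x, g t) ^ 2
            ≤ e (-2 * ν) x * (C * e ν x * ∫⁻ t in Ioi x, e (-ν) t * g t ^ 2) :=
              mul_le_mul_right (sq_lintegral_Ioi_le hν hg.aemeasurable x) _
          _ = C * ((e (-2 * ν) x * e ν x) * ∫⁻ t in Ioi x, e (-ν) t * g t ^ 2) := by ring
          _ = C * (e (-ν) x * ∫⁻ t in Ioi x, e (-ν) t * g t ^ 2) := by
              rw [he]; ring_nf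
    _ = C * ∫⁻ t, ∫⁻ x in Iio t, e (-ν) x * (e (-ν) t * g t ^ 2) := by
        rw [lintegral_const_mul' _ _ ENNReal.ofReal_ne_top,
          lintegral_lintegral_Ioi_swap (by fun_prop)]
    _ = C * ∫⁻ t, C * (e (-2 * ν) t * g t ^ 2) := by
        congr 1
        refine lintegral_congr fun t => ?_
        rw [lintegral_mul_const _ (by fun_prop), lintegral_ofReal_exp_mul_Iio (by linarith)]
        calc C * e (-ν) t * (e (-ν) t * g t ^ 2)
            = C * ((e (-ν) t * e (-ν) t) * g t ^ 2) := by ring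
          _ = C * (e (-2 * ν) t * g t ^ 2) := by rw [he]; ring_nf
    _ = C ^ 2 * ∫⁻ t, e (-2 * ν) t * g t ^ 2 := by
        rw [lintegral_const_mul' _ _ ENNReal.ofReal_ne_top, sq, mul_assoc]

theorem lintegral_sq_lintegral_Ioi_le {ν : ℝ} (hν : ν < 0) {g : ℝ → ℝ≥0∞}
    (hg : AEMeasurable g) :
    ∫⁻ x, (∫⁻ t in Ioi x, g t) ^ 2 ∂wMeasure ν ≤
      ENNReal.ofReal (-ν)⁻¹ ^ 2 * ∫⁻ x, g x ^ 2 ∂wMeasure ν := by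
  have hsq : (fun x => g x ^ 2) =ᵐ[wMeasure ν] fun x => hg.mk g x ^ 2 :=
    (wMeasure_absolutelyContinuous ν).ae_eq (hg.ae_eq_mk.fun_comp (· ^ 2))
  simp_rw [fun x => lintegral_congr_ae
    (ae_restrict_of_ae (μ := volume) (s := Ioi x) hg.ae_eq_mk), lintegral_congr_ae hsq]
  exact lintegral_sq_lintegral_Ioi_le_of_measurable hν hg.measurable_mk

section TailPrimitive

variable {E : Type*} [NormedAddCommGroup E] [NormedSpace ℝ E]

noncomputable def tailPrimitive (f : ℝ → E) (x : ℝ) : E := -∫ t in Ici x, f t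

theorem tailPrimitive_congr_ae {f g : ℝ → E} (h : f =ᵐ[volume] g) :
    tailPrimitive f = tailPrimitive g :=
  funext fun x => by rw [tailPrimitive, tailPrimitive, integral_congr_ae (ae_restrict_of_ae h)]

theorem enorm_tailPrimitive_le (f : ℝ → E) (x : ℝ) :
    ‖tailPrimitive f x‖ₑ ≤ ∫⁻ t in Ioi x, ‖f t‖ₑ := by
  rw [tailPrimitive, enorm_neg, integral_Ici_eq_integral_Ioi]
  exact enorm_integral_le_lintegral_enorm _

theorem tailPrimitive_eq_intervalIntegral_sub {f : ℝ → E} (hf : ∀ x, IntegrableOn f (Ioi x))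
    (x : ℝ) : tailPrimitive f x = (∫ t in 0..x, f t) - ∫ t in Ioi 0, f t := by
  rw [← intervalIntegral.integral_Ioi_sub_Ioi' (hf 0) (hf x), tailPrimitive,
    integral_Ici_eq_integral_Ioi, sub_sub_cancel_left]

theorem continuous_tailPrimitive {f : ℝ → E} (hf : ∀ x, IntegrableOn f (Ioi x)) :
    Continuous (tailPrimitive f) := by
  rw [funext (tailPrimitive_eq_intervalIntegral_sub hf)]
  refine (intervalIntegral.continuous_primitive (fun a b => ?_) 0).sub continuous_const
  exact ⟨(hf a).mono_set Ioc_subset_Ioi_self, (hf b).mono_set Ioc_subset_Ioi_self⟩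

theorem tailPrimitive_add {f g : ℝ → E} (hf : ∀ x, IntegrableOn f (Ioi x))
    (hg : ∀ x, IntegrableOn g (Ioi x)) :
    tailPrimitive (f + g) = tailPrimitive f + tailPrimitive g :=
  funext fun x => by
    simp only [tailPrimitive, Pi.add_apply, integral_Ici_eq_integral_Ioi,
      integral_add (hf x) (hg x), neg_add]

theorem tailPrimitive_smul {𝕜 : Type*} [NontriviallyNormedField 𝕜] [NormedSpace 𝕜 E]
    [SMulCommClass ℝ 𝕜 E] (c : 𝕜) (f : ℝ → E) :
    tailPrimitive (c • f) = c • tailPrimitive f :=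
  funext fun x => by simp only [tailPrimitive, Pi.smul_apply, integral_smul, smul_neg]

theorem tailPrimitive_of_hasDerivAt [CompleteSpace E] {φ φ' : ℝ → E}
    (hderiv : ∀ x, HasDerivAt φ (φ' x) x) (hφ' : ∀ x, IntegrableOn φ' (Ioi x))
    (hφ : Tendsto φ atTop (nhds 0)) :
    tailPrimitive φ' = φ :=
  funext fun x => by
    rw [tailPrimitive, integral_Ici_eq_integral_Ioi,
      integral_Ioi_of_hasDerivAt_of_tendsto' (fun t _ => hderiv t) (hφ' x) hφ, zero_sub, neg_neg]

end TailPrimitive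

section WeightedSpace

variable {E : Type*} [NormedAddCommGroup E] {ν : ℝ}

theorem integrableOn_Ioi_of_memLp_wMeasure (hν : ν < 0) {f : ℝ → E}
    (hf : MemLp f 2 (wMeasure ν)) (x : ℝ) :
    IntegrableOn f (Ioi x) := by
  have hmeas := hf.aestronglyMeasurable.mono_ac (absolutelyContinuous_wMeasure ν)
  refine ⟨hmeas.restrict, lt_of_pow_lt_pow_left' 2 ?_⟩
  calc (∫⁻ t in Ioi x, ‖f t‖ₑ) ^ 2
      ≤ ENNReal.ofReal (-(2 * ν))⁻¹ * ENNReal.ofReal (Real.exp (2 * ν * x)) *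
          ∫⁻ t in Ioi x, ENNReal.ofReal (Real.exp (-(2 * ν) * t)) * ‖f t‖ₑ ^ 2 :=
        sq_lintegral_Ioi_le (by linarith) hmeas.enorm x
    _ ≤ ENNReal.ofReal (-(2 * ν))⁻¹ * ENNReal.ofReal (Real.exp (2 * ν * x)) *
          ∫⁻ t, ‖f t‖ₑ ^ 2 ∂wMeasure ν := by
        rw [lintegral_wMeasure]
        simp only [neg_mul]
        gcongr
        exact Measure.restrict_le_self
    _ < ⊤ := by
        rw [← sq_eLpNorm_two]
        exact mul_lt_top (mul_lt_top ofReal_lt_top ofReal_lt_top) (pow_lt_top hf.2)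

theorem eLpNorm_tailPrimitive_le [NormedSpace ℝ E] (hν : ν < 0) {f : ℝ → E}
    (hf : AEStronglyMeasurable f (wMeasure ν)) :
    eLpNorm (tailPrimitive f) 2 (wMeasure ν) ≤
      ENNReal.ofReal (-ν)⁻¹ * eLpNorm f 2 (wMeasure ν) := by
  refine (ENNReal.pow_le_pow_left_iff two_ne_zero).1 ?_
  rw [mul_pow, sq_eLpNorm_two, sq_eLpNorm_two]
  calc ∫⁻ x, ‖tailPrimitive f x‖ₑ ^ 2 ∂wMeasure ν
      ≤ ∫⁻ x, (∫⁻ t in Ioi x, ‖f t‖ₑ) ^ 2 ∂wMeasure ν := by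
        gcongr with x
        exact enorm_tailPrimitive_le f x
    _ ≤ _ := lintegral_sq_lintegral_Ioi_le hν
        (hf.mono_ac (absolutelyContinuous_wMeasure ν)).enorm

theorem memLp_tailPrimitive [NormedSpace ℝ E] (hν : ν < 0) {f : ℝ → E}
    (hf : MemLp f 2 (wMeasure ν)) :
    MemLp (tailPrimitive f) 2 (wMeasure ν) :=
  ⟨(continuous_tailPrimitive (integrableOn_Ioi_of_memLp_wMeasure hν hf)).aestronglyMeasurable,
    (eLpNorm_tailPrimitive_le hν hf.1).trans_lt (mul_lt_top ofReal_lt_top hf.2)⟩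

end WeightedSpace

section Operator

variable {ν : ℝ} (hν : ν < 0)

noncomputable def tailPrimitiveₗ : Lp ℂ 2 (wMeasure ν) →ₗ[ℂ] Lp ℂ 2 (wMeasure ν) where
  toFun f := (memLp_tailPrimitive hν (Lp.memLp f)).toLp _
  map_add' f g := by
    rw [← MemLp.toLp_add]
    refine MemLp.toLp_congr _ _ (EventuallyEq.of_eq ?_)
    rw [tailPrimitive_congr_ae ((absolutelyContinuous_wMeasure ν).ae_eq (Lp.coeFn_add f g)),
      tailPrimitive_add (integrableOn_Ioi_of_memLp_wMeasure hν (Lp.memLp f))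
        (integrableOn_Ioi_of_memLp_wMeasure hν (Lp.memLp g))]
  map_smul' c f := by
    rw [RingHom.id_apply, ← MemLp.toLp_const_smul]
    refine MemLp.toLp_congr _ _ (EventuallyEq.of_eq ?_)
    rw [tailPrimitive_congr_ae ((absolutelyContinuous_wMeasure ν).ae_eq (Lp.coeFn_smul c f)),
      tailPrimitive_smul]

theorem norm_tailPrimitiveₗ_le (f : Lp ℂ 2 (wMeasure ν)) :
    ‖tailPrimitiveₗ hν f‖ ≤ (-ν)⁻¹ * ‖f‖ := by
  rw [tailPrimitiveₗ, LinearMap.coe_mk, AddHom.coe_mk, Lp.norm_toLp, Lp.norm_def,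
    ← ENNReal.toReal_ofReal (inv_nonneg.2 (neg_nonneg.2 hν.le)), ← ENNReal.toReal_mul]
  exact ENNReal.toReal_mono (mul_ne_top ofReal_ne_top (Lp.eLpNorm_ne_top f))
    (eLpNorm_tailPrimitive_le hν (Lp.aestronglyMeasurable f))

noncomputable def tailPrimitiveL : Lp ℂ 2 (wMeasure ν) →L[ℂ] Lp ℂ 2 (wMeasure ν) :=
  (tailPrimitiveₗ hν).mkContinuous (-ν)⁻¹ (norm_tailPrimitiveₗ_le hν)

theorem coeFn_tailPrimitiveL (f : Lp ℂ 2 (wMeasure ν)) :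
    tailPrimitiveL hν f =ᵐ[volume] tailPrimitive f :=
  (absolutelyContinuous_wMeasure ν).ae_eq (memLp_tailPrimitive hν (Lp.memLp f)).coeFn_toLp

theorem norm_tailPrimitiveL_le : ‖tailPrimitiveL hν‖ ≤ (-ν)⁻¹ :=
  LinearMap.mkContinuous_norm_le _ (inv_nonneg.2 (neg_nonneg.2 hν.le)) _

theorem tailPrimitiveL_toLp_of_hasDerivAt {φ φ' : ℝ → ℂ} (hφ : MemLp φ 2 (wMeasure ν))
    (hφ' : MemLp φ' 2 (wMeasure ν)) (hderiv : ∀ x, HasDerivAt φ (φ' x) x)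
    (hlim : Tendsto φ atTop (nhds 0)) :
    tailPrimitiveL hν (hφ'.toLp φ') = hφ.toLp φ := by
  have htail : tailPrimitive (hφ'.toLp φ') = φ := by
    rw [tailPrimitive_congr_ae ((absolutelyContinuous_wMeasure ν).ae_eq hφ'.coeFn_toLp),
      tailPrimitive_of_hasDerivAt hderiv (integrableOn_Ioi_of_memLp_wMeasure hν hφ') hlim]
  have h := coeFn_tailPrimitiveL hν (hφ'.toLp φ')
  rw [htail] at h
  exact Lp.ext ((wMeasure_absolutelyContinuous ν).ae_eq
    (h.trans ((absolutelyContinuous_wMeasure ν).ae_eq hφ.coeFn_toLp).symm))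

noncomputable def expIndicator (a : ℝ) : ℝ → ℂ :=
  (Ici 0).indicator fun x => (Real.exp (a * x) : ℂ)

theorem memLp_expIndicator {a : ℝ} (ha : a < ν) : MemLp (expIndicator a) 2 (wMeasure ν) := by
  refine ⟨(Measurable.indicator (by fun_prop) measurableSet_Ici).aestronglyMeasurable,
    lt_of_pow_lt_pow_left' 2 ?_⟩
  have hpt : ∀ x, ENNReal.ofReal (Real.exp (-2 * ν * x)) * ‖expIndicator a x‖ₑ ^ 2 =
      (Ici 0).indicator (fun x => ENNReal.ofReal (Real.exp (2 * (a - ν) * x))) x := by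
    intro x
    by_cases hx : x ∈ Ici 0
    · simp only [expIndicator, indicator_of_mem hx]
      rw [← ofReal_norm, Complex.norm_real, Real.norm_of_nonneg (Real.exp_pos _).le, sq,
        ofReal_exp_mul_ofReal_exp, ofReal_exp_mul_ofReal_exp]
      ring_nf
    · simp [expIndicator, hx]
  rw [sq_eLpNorm_two, lintegral_wMeasure]
  simp_rw [hpt]
  rw [lintegral_indicator measurableSet_Ici, ← restrict_Ioi_eq_restrict_Ici,
    lintegral_ofReal_exp_mul_Ioi (by linarith)]
  exact mul_lt_top ofReal_lt_top ofReal_lt_top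

theorem indicator_tailPrimitive_expIndicator {a : ℝ} (ha : a < 0) :
    (Ici 0).indicator (tailPrimitive (expIndicator a)) = (a⁻¹ : ℂ) • expIndicator a := by
  funext x
  by_cases hx : x ∈ Ici 0
  · have hint : ∫ t in Ici x, expIndicator a t = ∫ t in Ici x, ((Real.exp (a * t) : ℝ) : ℂ) :=
      setIntegral_congr_fun measurableSet_Ici fun t ht => indicator_of_mem (le_trans hx ht) _
    rw [indicator_of_mem hx, Pi.smul_apply, tailPrimitive, hint, expIndicator,
      indicator_of_mem hx, smul_eq_mul, integral_complex_ofReal, integral_Ici_eq_integral_Ioi,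
      integral_exp_mul_Ioi ha]
    push_cast
    field_simp
  · simp [hx, expIndicator]

theorem toLp_expIndicator_ne_zero {a : ℝ} (ha : a < ν) :
    (memLp_expIndicator ha).toLp _ ≠ 0 := by
  rw [Ne, Lp.eq_zero_iff_ae_eq_zero]
  intro h
  have h' := (absolutelyContinuous_wMeasure ν).ae_eq
    ((memLp_expIndicator ha).coeFn_toLp.symm.trans h)
  have hnull : volume (Ici (0 : ℝ)) = 0 :=
    measure_mono_null (fun x hx => by simpa [expIndicator] using hx) (ae_iff.1 h')
  simp at hnull

theorem inv_neg_le_norm_tailPrimitiveL {a : ℝ} (ha : a < ν) :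
    (-a)⁻¹ ≤ ‖tailPrimitiveL hν‖ := by
  set F := (memLp_expIndicator ha).toLp _
  have hF := (absolutelyContinuous_wMeasure ν).ae_eq (memLp_expIndicator ha).coeFn_toLp
  have hle : ‖(a⁻¹ : ℂ) • F‖ ≤ ‖tailPrimitiveL hν F‖ := by
    refine Lp.norm_le_norm_of_ae_le ?_
    filter_upwards [Lp.coeFn_smul (a⁻¹ : ℂ) F, (memLp_expIndicator ha).coeFn_toLp,
      (wMeasure_absolutelyContinuous ν).ae_eq (coeFn_tailPrimitiveL hν F)] with x h1 h2 h3
    rw [h1, h3, Pi.smul_apply, h2, tailPrimitive_congr_ae hF, ← Pi.smul_apply,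
      ← indicator_tailPrimitive_expIndicator (ha.trans hν)]
    exact norm_indicator_le_norm_self _ _
  have hF0 : 0 < ‖F‖ := norm_pos_iff.2 (toLp_expIndicator_ne_zero ha)
  rw [norm_smul, norm_inv, Complex.norm_real, Real.norm_of_nonpos (ha.trans hν).le] at hle
  exact le_of_mul_le_mul_right (hle.trans ((tailPrimitiveL hν).le_opNorm F)) hF0

theorem norm_tailPrimitiveL : ‖tailPrimitiveL hν‖ = (-ν)⁻¹ := by
  refine le_antisymm (norm_tailPrimitiveL_le hν) (le_of_tendsto (x := nhdsWithin ν (Iio ν)) ?_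
    (eventually_nhdsWithin_of_forall fun a ha => inv_neg_le_norm_tailPrimitiveL hν ha))
  exact ((continuous_neg.tendsto ν).inv₀ (by linarith)).mono_left nhdsWithin_le_nhds

end Operator

/-- For `ν < 0`, the map `(Jφ)(x) = -∫_x^∞ φ(t) dt` is a bounded linear operator
on `H_{ν,0}(ℝ)` with norm `1/|ν|`, and for continuously differentiable `φ` with
`φ, φ' ∈ H_{ν,0}(ℝ)` and decay at `+∞` one has `J(φ') = φ`. -/
theorem integration_operator_neg_nu (ν : ℝ) (hν : ν < 0) :
    ∃ J : Lp ℂ 2 (wMeasure ν) →L[ℂ] Lp ℂ 2 (wMeasure ν),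
      (∀ f : Lp ℂ 2 (wMeasure ν),
        (J f : ℝ → ℂ) =ᵐ[volume] fun x => -∫ t in Set.Ici x, (f : ℝ → ℂ) t) ∧
      ‖J‖ = 1 / |ν| ∧
      ∀ (φ φd : ℝ → ℂ) (hφ : MemLp φ 2 (wMeasure ν)) (hφd : MemLp φd 2 (wMeasure ν)),
        (∀ x, HasDerivAt φ (φd x) x) → Continuous φd →
        Filter.Tendsto φ Filter.atTop (nhds 0) →
        J (hφd.toLp φd) = hφ.toLp φ := by
  refine ⟨tailPrimitiveL hν, coeFn_tailPrimitiveL hν, ?_,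
    fun φ φd hφ hφd hderiv _ hlim => tailPrimitiveL_toLp_of_hasDerivAt hν hφ hφd hderiv hlim⟩
  rw [norm_tailPrimitiveL, abs_of_neg hν, one_div]
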